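/- arXiv:2005.03250 — 4 statements merged into one kernel-verified Lean document; each statement's English description precedes it below -/
import Mathlib

section
/- In the ring S = 𝔽_p[x^4, x^3y, xy^3, y^4] (the subring of 𝔽_p[x,y] generated by those monomials), the element (x^3 y)^2 does not belong to the ideal generated by x^4, but ((x^3 y)^2)^p belongs to the ideal generated by (x^4)^p. In particular S is not F-pure. -/
/-!
`S` is spanned by monomials whose exponents lie in the additive monoid generated by
`(4,0), (3,1), (1,3), (0,4)`. Cancelling `x⁴`, the first claim asks whether `x²y² ∈ S`, and
`(2,2)` is not a sum of those generators. For the second, `(x³y)^(2p) = (x²y²)ᵖ · x^(4p)`, and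
`(x²y²)ⁿ ∈ S` for every `n ≠ 1`: write `n = 2a + 3b` and use `x⁴y⁴, x⁶y⁶ = x⁴(xy³)² ∈ S`.
-/

open MvPolynomial

namespace MvPolynomial

variable {σ R : Type*} [CommSemiring R]

theorem support_subset_of_mem_adjoin {M : AddSubmonoid (σ →₀ ℕ)} {s : Set (MvPolynomial σ R)}
    (hs : ∀ g ∈ s, (g.support : Set (σ →₀ ℕ)) ⊆ M) {f : MvPolynomial σ R}
    (hf : f ∈ Algebra.adjoin R s) : (f.support : Set (σ →₀ ℕ)) ⊆ M := by
  classical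
  induction hf using Algebra.adjoin_induction with
  | mem g hg => exact hs g hg
  | algebraMap r =>
    intro d hd
    rw [Finset.mem_coe, algebraMap_eq, C_apply] at hd
    rw [Finset.mem_singleton.1 (support_monomial_subset hd)]
    exact M.zero_mem
  | add f g _ _ hf hg => exact (Finset.coe_subset.2 support_add).trans (by simpa using ⟨hf, hg⟩)
  | mul f g _ _ hf hg =>
    intro d hd
    obtain ⟨u, hu, v, hv, rfl⟩ := Finset.mem_add.1 (support_mul f g hd)
    exact add_mem (hf hu) (hg hv)

theorem X_pow_mul_X_pow_eq_monomial (i j : σ) (a b : ℕ) :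
    (X i ^ a * X j ^ b : MvPolynomial σ R) =
      monomial (Finsupp.single i a + Finsupp.single j b) 1 := by
  rw [X_pow_eq_monomial, X_pow_eq_monomial, monomial_mul, one_mul]

end MvPolynomial

noncomputable def veroneseLikeExponents : Fin 4 → Fin 2 →₀ ℕ :=
  ![Finsupp.single 0 4, Finsupp.single 0 3 + Finsupp.single 1 1,
    Finsupp.single 0 1 + Finsupp.single 1 3, Finsupp.single 1 4]

theorem single_two_add_single_two_notMem_closure :
    Finsupp.single 0 2 + Finsupp.single 1 2 ∉
      AddSubmonoid.closure (Set.range veroneseLikeExponents) := by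
  rw [AddSubmonoid.mem_closure_range_iff_of_fintype]
  rintro ⟨a, h⟩
  have hx : 2 = a 0 * 4 + a 1 * 3 + a 2 := by
    simpa [Fin.sum_univ_four, veroneseLikeExponents] using DFunLike.congr_fun h 0
  have hy : 2 = a 1 + a 2 * 3 + a 3 * 4 := by
    simpa [Fin.sum_univ_four, veroneseLikeExponents] using DFunLike.congr_fun h 1
  generalize a 0 = a₀, a 1 = a₁, a 2 = a₂, a 3 = a₃ at hx hy
  have : a₂ ≤ 2 := by omega
  interval_cases a₂ <;> omega

theorem X_zero_sq_mul_X_one_sq_notMem_adjoin {R : Type*} [CommSemiring R] [Nontrivial R] :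
    (X 0 ^ 2 * X 1 ^ 2 : MvPolynomial (Fin 2) R) ∉
      Algebra.adjoin R {X 0 ^ 4, X 0 ^ 3 * X 1, X 0 * X 1 ^ 3, X 1 ^ 4} := by
  intro h
  refine single_two_add_single_two_notMem_closure (support_subset_of_mem_adjoin ?_ h ?_)
  · have hgen (i : Fin 4) :
        veroneseLikeExponents i ∈ AddSubmonoid.closure (Set.range veroneseLikeExponents) :=
      AddSubmonoid.subset_closure ⟨i, rfl⟩
    rintro g (rfl | rfl | rfl | rfl) <;> simp [support_X_pow, support_mul_X, support_X_mul] <;>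
      [exact hgen 0; exact hgen 1; exact hgen 2; exact hgen 3]
  · simp [X_pow_mul_X_pow_eq_monomial]

theorem sq_mul_sq_pow_mem_adjoin {R A : Type*} [CommSemiring R] [CommSemiring A] [Algebra R A]
    (x y : A) {n : ℕ} (hn : n ≠ 1) :
    (x ^ 2 * y ^ 2) ^ n ∈ Algebra.adjoin R {x ^ 4, x ^ 3 * y, x * y ^ 3, y ^ 4} := by
  set S := Algebra.adjoin R {x ^ 4, x ^ 3 * y, x * y ^ 3, y ^ 4}
  have hx4y4 : x ^ 4 * y ^ 4 ∈ S :=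
    mul_mem (Algebra.subset_adjoin (by simp)) (Algebra.subset_adjoin (by simp))
  have hx6y6 : x ^ 4 * (x * y ^ 3) ^ 2 ∈ S :=
    mul_mem (Algebra.subset_adjoin (by simp)) (pow_mem (Algebra.subset_adjoin (by simp)) 2)
  obtain ⟨k, rfl | rfl⟩ : ∃ k, n = 2 * k ∨ n = 2 * k + 3 := by
    obtain ⟨k, h | h⟩ := Nat.even_or_odd' n
    exacts [⟨k, .inl h⟩, ⟨k - 1, .inr (by omega)⟩]
  · rw [show (x ^ 2 * y ^ 2) ^ (2 * k) = (x ^ 4 * y ^ 4) ^ k by ring]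
    exact pow_mem hx4y4 k
  · rw [show (x ^ 2 * y ^ 2) ^ (2 * k + 3) = (x ^ 4 * y ^ 4) ^ k * (x ^ 4 * (x * y ^ 3) ^ 2) by
      ring]
    exact mul_mem (pow_mem hx4y4 k) hx6y6

/-- In the ring `S = 𝔽_p[x⁴, x³y, xy³, y⁴]` (the subring of `𝔽_p[x,y]` generated by those
monomials), the element `(x³y)²` does not belong to the ideal of `S` generated by `x⁴`, while
`((x³y)²)ᵖ` belongs to the ideal of `S` generated by `(x⁴)ᵖ`.  (This is the failure of the
purity criterion for Frobenius, so `S` is not `F`-pure.) -/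
theorem veronese_like_not_F_pure (p : ℕ) (hp : p.Prime) :
    let x : MvPolynomial (Fin 2) (ZMod p) := X 0
    let y : MvPolynomial (Fin 2) (ZMod p) := X 1
    let S : Subalgebra (ZMod p) (MvPolynomial (Fin 2) (ZMod p)) :=
      Algebra.adjoin (ZMod p) {x ^ 4, x ^ 3 * y, x * y ^ 3, y ^ 4}
    (¬ ∃ s ∈ S, (x ^ 3 * y) ^ 2 = s * x ^ 4) ∧
    (∃ s ∈ S, (x ^ 3 * y) ^ (2 * p) = s * x ^ (4 * p)) := by
  have := Fact.mk hp
  intro x y S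
  constructor
  · rintro ⟨s, hs, h⟩
    have hs' : s = x ^ 2 * y ^ 2 :=
      mul_right_cancel₀ (pow_ne_zero 4 (X_ne_zero 0)) (by rw [← h]; ring)
    exact X_zero_sq_mul_X_one_sq_notMem_adjoin (hs' ▸ hs)
  · exact ⟨(x ^ 2 * y ^ 2) ^ p, sq_mul_sq_pow_mem_adjoin x y hp.one_lt.ne', by ring⟩
end

section
/- Let φ : ℤ[t_1,t_2,t_3,t_4] → ℤ[x,y] send t_1 ↦ x^4, t_2 ↦ x^3y, t_3 ↦ xy^3, t_4 ↦ y^4, with kernel I. Then the radical of the image of (t_1, t_4) in R/I equals the image of (t_1,t_2,t_3,t_4) in R/I; equivalently, in S = ℤ[x^4,x^3y,xy^3,y^4], the radical of (x^4, y^4)S is (x^4, x^3y, xy^3, y^4)S. -/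
open MvPolynomial

set_option maxHeartbeats 1000000 in
set_option synthInstance.maxHeartbeats 200000 in
/-- In the subring `S = ℤ[x⁴, x³y, xy³, y⁴]` of `ℤ[x,y]`, the radical of the ideal
`(x⁴, y⁴)S` equals the ideal `(x⁴, x³y, xy³, y⁴)S`. -/
theorem radical_of_x4_y4_in_veronese_like_subring :
    let x : MvPolynomial (Fin 2) ℤ := X 0
    let y : MvPolynomial (Fin 2) ℤ := X 1
    let S : Subalgebra ℤ (MvPolynomial (Fin 2) ℤ) :=
      Algebra.adjoin ℤ {x ^ 4, x ^ 3 * y, x * y ^ 3, y ^ 4}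
    ∀ (a b c d : S), (a : MvPolynomial (Fin 2) ℤ) = x ^ 4 →
      (b : MvPolynomial (Fin 2) ℤ) = x ^ 3 * y →
      (c : MvPolynomial (Fin 2) ℤ) = x * y ^ 3 →
      (d : MvPolynomial (Fin 2) ℤ) = y ^ 4 →
      (Ideal.span ({a, d} : Set S)).radical = Ideal.span ({a, b, c, d} : Set S) := by
  intro x y S a b c d ha hb hc hd
  have hx : x = X 0 := rfl
  have hy : y = X 1 := rfl
  set J : Ideal S := Ideal.span ({a, b, c, d} : Set S) with hJ
  -- evaluation at 0, restricted to S
  let φ : S →ₐ[ℤ] ℤ := (aeval (0 : Fin 2 → ℤ)).comp S.val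
  have hval : ∀ s : S, φ s = aeval (0 : Fin 2 → ℤ) (s : MvPolynomial (Fin 2) ℤ) :=
    fun s => rfl
  have hφa : φ a = 0 := by rw [hval, ha, hx]; simp
  have hφb : φ b = 0 := by rw [hval, hb, hx, hy]; simp
  have hφc : φ c = 0 := by rw [hval, hc, hx, hy]; simp
  have hφd : φ d = 0 := by rw [hval, hd, hy]; simp
  have haJ : a ∈ J := Ideal.subset_span (by simp)
  have hbJ : b ∈ J := Ideal.subset_span (by simp)
  have hcJ : c ∈ J := Ideal.subset_span (by simp)
  have hdJ : d ∈ J := Ideal.subset_span (by simp)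
  -- key: every element of S minus its constant term lies in J
  have key : ∀ s : S, s - algebraMap ℤ S (φ s) ∈ J := by
    rintro ⟨p, hp⟩
    induction hp using Algebra.adjoin_induction with
    | mem z hz =>
      have hzJ : (⟨z, Algebra.subset_adjoin hz⟩ : S) ∈ J ∧
          φ ⟨z, Algebra.subset_adjoin hz⟩ = 0 := by
        have hz' := hz
        rcases hz' with h | h | h | h
        · have : a = (⟨z, Algebra.subset_adjoin hz⟩ : S) := Subtype.ext (ha.trans h.symm)
          exact ⟨this ▸ haJ, this ▸ hφa⟩
        · have : b = (⟨z, Algebra.subset_adjoin hz⟩ : S) := Subtype.ext (hb.trans h.symm)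
          exact ⟨this ▸ hbJ, this ▸ hφb⟩
        · have : c = (⟨z, Algebra.subset_adjoin hz⟩ : S) := Subtype.ext (hc.trans h.symm)
          exact ⟨this ▸ hcJ, this ▸ hφc⟩
        · have : d = (⟨z, Algebra.subset_adjoin hz⟩ : S) := Subtype.ext
            (hd.trans (Set.mem_singleton_iff.mp h).symm)
          exact ⟨this ▸ hdJ, this ▸ hφd⟩
      rw [hzJ.2, map_zero, sub_zero]
      exact hzJ.1
    | algebraMap r =>
      have h1 : (⟨algebraMap ℤ (MvPolynomial (Fin 2) ℤ) r,
          Subalgebra.algebraMap_mem _ r⟩ : S) = algebraMap ℤ S r := rfl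
      rw [h1]
      have h2 : φ (algebraMap ℤ S r) = r := by
        rw [hval]; simp
      rw [h2, sub_self]
      exact J.zero_mem
    | add u v hu hv ihu ihv =>
      have heq : (⟨u + v, add_mem hu hv⟩ : S) = ⟨u, hu⟩ + ⟨v, hv⟩ := rfl
      have h1 : φ (⟨u, hu⟩ + ⟨v, hv⟩) = φ ⟨u, hu⟩ + φ ⟨v, hv⟩ := map_add φ _ _
      have h2 : algebraMap ℤ S (φ ⟨u, hu⟩ + φ ⟨v, hv⟩)
          = algebraMap ℤ S (φ ⟨u, hu⟩) + algebraMap ℤ S (φ ⟨v, hv⟩) :=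
        map_add (algebraMap ℤ S) _ _
      rw [heq, h1, h2, add_sub_add_comm]
      exact J.add_mem ihu ihv
    | mul u v hu hv ihu ihv =>
      have heq : (⟨u * v, mul_mem hu hv⟩ : S) = ⟨u, hu⟩ * ⟨v, hv⟩ := rfl
      have h1 : φ (⟨u, hu⟩ * ⟨v, hv⟩) = φ ⟨u, hu⟩ * φ ⟨v, hv⟩ := map_mul φ _ _
      have e : (⟨u, hu⟩ * ⟨v, hv⟩ : S) - algebraMap ℤ S (φ ⟨u, hu⟩ * φ ⟨v, hv⟩)
          = (⟨u, hu⟩ : S) * (⟨v, hv⟩ - algebraMap ℤ S (φ ⟨v, hv⟩))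
            + algebraMap ℤ S (φ ⟨v, hv⟩) * (⟨u, hu⟩ - algebraMap ℤ S (φ ⟨u, hu⟩)) := by
        rw [map_mul]; ring
      rw [heq, h1, e]
      exact J.add_mem (J.mul_mem_left _ ihv) (J.mul_mem_left _ ihu)
  -- J is the kernel of φ, hence prime
  have hker : J = RingHom.ker φ.toRingHom := by
    apply le_antisymm
    · rw [hJ, Ideal.span_le]
      rintro z (h | h | h | h) <;> subst h <;>
        simp only [SetLike.mem_coe, RingHom.mem_ker, AlgHom.toRingHom_eq_coe, RingHom.coe_coe]
      exacts [hφa, hφb, hφc, hφd]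
    · intro s hs
      have hs0 : φ s = 0 := hs
      have := key s
      rwa [hs0, map_zero, sub_zero] at this
  have hprime : J.IsPrime := by
    rw [hker]; exact RingHom.ker_isPrime _
  apply le_antisymm
  · rw [hprime.radical_le_iff, hJ, Ideal.span_le]
    rintro z (h | h) <;> subst h
    exacts [haJ, hdJ]
  · rw [hJ, Ideal.span_le]
    have haR : a ∈ (Ideal.span ({a, d} : Set S)).radical :=
      Ideal.le_radical (Ideal.subset_span (by simp))
    have hdR : d ∈ (Ideal.span ({a, d} : Set S)).radical :=
      Ideal.le_radical (Ideal.subset_span (by simp))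
    have hbR : b ∈ (Ideal.span ({a, d} : Set S)).radical := by
      refine ⟨4, ?_⟩
      have hb4 : b ^ 4 = a ^ 3 * d := by
        apply Subtype.ext
        push_cast [ha, hb, hd]
        ring
      rw [hb4]
      exact Ideal.mul_mem_left _ _ (Ideal.subset_span (by simp))
    have hcR : c ∈ (Ideal.span ({a, d} : Set S)).radical := by
      refine ⟨4, ?_⟩
      have hc4 : c ^ 4 = d ^ 3 * a := by
        apply Subtype.ext
        push_cast [ha, hc, hd]
        ring
      rw [hc4]
      exact Ideal.mul_mem_left _ _ (Ideal.subset_span (by simp))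
    rintro z (h | h | h | h) <;> subst h <;> assumption
end

section
/- In R_t = ℤ[t_1,t_2,t_3,t_4] localized at t_1, the defining ideal I of ℤ[x^4,x^3y,xy^3,y^4] becomes generated by the two elements t_3 − t_2^3/t_1^2 and t_4 − t_2^4/t_1^3; these form a regular sequence in R_{t_1}. -/
/-!
After inverting `t₁`, the substitution `t₃ ↦ t₃ - t₂³/t₁²`, `t₄ ↦ t₄ - t₂⁴/t₁³` (fixing `t₁`, `t₂`)
is an automorphism of `R_{t₁}` carrying the variables `t₃`, `t₄` to the two claimed generators.
Composed with the localized parametrization it becomes the map `t₁ ↦ x⁴`, `t₂ ↦ x³y`,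
`t₃, t₄ ↦ 0`, because `xy³ = (x³y)³/(x⁴)²` and `y⁴ = (x³y)⁴/(x⁴)³`. As the exponent vectors
`(4,0)` and `(3,1)` are linearly independent, `x⁴` and `x³y` are algebraically independent, so the
kernel of that map is `(t₃, t₄)`, which is a regular sequence since `t₃` is prime and `t₃ ∤ t₄`.
Localization is exact and preserves regular sequences; transporting both facts back along the
automorphism gives the theorem, the quotient being nonzero because it embeds in `ℤ[x, y]_x`.
-/

open MvPolynomial

namespace RingTheory.Sequence

theorem isWeaklyRegular_pair_of_prime {A : Type*} [CommRing A] [IsDomain A] {p q : A}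
    (hp : Prime p) (hpq : ¬p ∣ q) : IsWeaklyRegular A [p, q] := by
  refine .cons (.of_ne_zero hp.ne_zero) (.cons ?_ (.nil _ _))
  refine (isSMulRegular_quotient_iff_mem_of_smul_mem _ _).2 fun a ha => ?_
  simp only [← Submodule.ideal_span_singleton_smul, Ideal.mul_top, Ideal.mem_span_singleton,
    smul_eq_mul] at ha ⊢
  exact (hp.dvd_or_dvd ha).resolve_left hpq

end RingTheory.Sequence

theorem RingHom.ker_eq_map_ker_comp {A B C : Type*} [CommRing A] [CommRing B] [Semiring C]
    (f : B →+* C) (e : A ≃+* B) : RingHom.ker f = (RingHom.ker (f.comp e)).map e := by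
  rw [← RingHom.comap_ker]
  exact (Ideal.map_comap_of_surjective _ e.surjective _).symm

namespace MvPolynomial

variable {R σ τ : Type*} [CommRing R]

theorem ker_killCompl {f : τ → σ} (hf : Function.Injective f) :
    RingHom.ker (killCompl (R := R) hf) = Ideal.span (X '' (Set.range f)ᶜ) := by
  set J := Ideal.span (X '' (Set.range f)ᶜ : Set (MvPolynomial σ R))
  have hkill : ∀ i ∉ Set.range f, killCompl (R := R) hf (X i) = 0 := fun i hi => by
    simp [killCompl, hi]
  have retract : (Ideal.Quotient.mkₐ R J).comp ((rename f).comp (killCompl hf)) =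
      Ideal.Quotient.mkₐ R J := by
    refine algHom_ext fun i => ?_
    by_cases hi : i ∈ Set.range f
    · obtain ⟨j, rfl⟩ := hi
      simp [killCompl]
    · simp only [AlgHom.comp_apply, hkill i hi, map_zero, Ideal.Quotient.mkₐ_eq_mk]
      exact (Ideal.Quotient.eq_zero_iff_mem.2 (Ideal.subset_span (Set.mem_image_of_mem X hi))).symm
  refine le_antisymm (fun p hp => ?_) (Ideal.span_le.2 ?_)
  · rw [← Ideal.Quotient.eq_zero_iff_mem, ← Ideal.Quotient.mkₐ_eq_mk R, ← retract]
    simp [RingHom.mem_ker.1 hp]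
  · rintro _ ⟨i, hi, rfl⟩
    exact hkill i hi

theorem injective_aeval_monomial {v : σ → τ →₀ ℕ}
    (hv : Function.Injective (Finsupp.linearCombination ℕ v)) :
    Function.Injective (aeval (fun i => monomial (v i) (1 : R)) :
      MvPolynomial σ R →ₐ[R] MvPolynomial τ R) := by
  have : (aeval (fun i => monomial (v i) (1 : R)) : MvPolynomial σ R →ₐ[R] MvPolynomial τ R) =
      AddMonoidAlgebra.mapDomainAlgHom R R (Finsupp.linearCombination ℕ v).toAddMonoidHom := by
    refine algHom_ext fun i => ?_
    rw [aeval_X, AddMonoidAlgebra.mapDomainAlgHom_apply, X]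
    refine (AddMonoidAlgebra.mapDomain_single.trans ?_).symm
    rw [LinearMap.toAddMonoidHom_coe, Finsupp.linearCombination_single, one_smul]
    rfl
  rw [this]
  exact AddMonoidAlgebra.mapDomain_injective hv

theorem isWeaklyRegular_X_X [IsDomain R] {i j : σ} (hij : i ≠ j) :
    RingTheory.Sequence.IsWeaklyRegular (MvPolynomial σ R) [(X i : MvPolynomial σ R), X j] :=
  RingTheory.Sequence.isWeaklyRegular_pair_of_prime X_prime ((X_dvd_X (R := R)).not.2 hij)

end MvPolynomial

noncomputable section

namespace RationalQuartic

open IsLocalization.Away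

variable {R : Type*} [CommRing R]

local notation "L" => Localization.Away (X 0 : MvPolynomial (Fin 4) R)
local notation "P" => Localization.Away (X 0 ^ 4 : MvPolynomial (Fin 2) R)
local notation "t" i => algebraMap (MvPolynomial (Fin 4) R) L (X i)
local notation "u" => invSelf (S := L) (X 0 : MvPolynomial (Fin 4) R)

variable (R) in
def param : MvPolynomial (Fin 4) R →ₐ[R] MvPolynomial (Fin 2) R :=
  aeval ![X 0 ^ 4, X 0 ^ 3 * X 1, X 0 * X 1 ^ 3, X 1 ^ 4]

variable (R) in
theorem param_X (i : Fin 4) :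
    param R (X i) = ![X 0 ^ 4, X 0 ^ 3 * X 1, X 0 * X 1 ^ 3, X 1 ^ 4] i :=
  aeval_X _ _

variable (R) in
theorem param_X_zero : param R (X 0) = X 0 ^ 4 := param_X R 0

def chartExponents : Fin 2 → Fin 2 →₀ ℕ :=
  ![Finsupp.single 0 4, Finsupp.single 0 3 + Finsupp.single 1 1]

theorem injective_linearCombination_chartExponents :
    Function.Injective (Finsupp.linearCombination ℕ chartExponents) := by
  have hval (e : Fin 2 →₀ ℕ) :
      Finsupp.linearCombination ℕ chartExponents e 0 = 4 * e 0 + 3 * e 1 ∧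
        Finsupp.linearCombination ℕ chartExponents e 1 = e 1 := by
    simp [chartExponents, Finsupp.linearCombination_apply, Finsupp.sum_fintype, mul_comm]
  intro e e' h
  have h0 := congr($h 0)
  have h1 := congr($h 1)
  rw [(hval e).1, (hval e').1] at h0
  rw [(hval e).2, (hval e').2] at h1
  exact Finsupp.ext (Fin.forall_fin_two.2 ⟨by omega, h1⟩)

variable (R) in
def shearedParam : MvPolynomial (Fin 4) R →ₐ[R] MvPolynomial (Fin 2) R :=
  (aeval fun i => monomial (chartExponents i) 1).comp
    (killCompl (show Function.Injective ![(0 : Fin 4), 1] by decide))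

variable (R) in
theorem shearedParam_X (i : Fin 4) :
    shearedParam R (X i) = ![X 0 ^ 4, X 0 ^ 3 * X 1, 0, 0] i := by
  have hchart (j : Fin 2) : shearedParam R (X (![0, 1] j)) = monomial (chartExponents j) 1 := by
    rw [shearedParam, AlgHom.comp_apply, ← rename_X, killCompl_rename_app, aeval_X]
  fin_cases i
  · simpa [chartExponents, X_pow_eq_monomial] using hchart 0
  · change shearedParam R (X 1) = X 0 ^ 3 * X 1
    refine (hchart 1).trans ?_
    rw [X_pow_eq_monomial, X, monomial_mul, one_mul]
    rfl
  all_goals simp [shearedParam, killCompl]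

variable (R) in
theorem shearedParam_X_zero : shearedParam R (X 0) = X 0 ^ 4 := shearedParam_X R 0

theorem ker_shearedParam :
    RingHom.ker (shearedParam R : MvPolynomial (Fin 4) R →+* MvPolynomial (Fin 2) R) =
      Ideal.span {X 2, X 3} := by
  have hinj := injective_aeval_monomial (R := R) injective_linearCombination_chartExponents
  refine (RingHom.ker_comp_of_injective _ hinj).trans ?_
  have hcompl : (Set.range ![(0 : Fin 4), 1])ᶜ = {2, 3} := by
    ext i
    fin_cases i <;> simp [Fin.ext_iff]
  rw [RingHom.ker_coe_toRingHom, ker_killCompl, hcompl, Set.image_pair]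

def shearVec (c : R) : Fin 4 → L :=
  ![t 0, t 1, (t 2) + c • ((t 1) ^ 3 * u ^ 2), (t 3) + c • ((t 1) ^ 4 * u ^ 3)]

def shearHom (c : R) : L →ₐ[R] L :=
  liftAlgHom (X 0) (f := aeval (shearVec c)) (by simpa [shearVec] using algebraMap_isUnit (X 0))

theorem shearHom_algebraMap (c : R) (p : MvPolynomial (Fin 4) R) :
    shearHom c (algebraMap _ L p) = aeval (shearVec c) p := by
  rw [shearHom, coe_liftAlgHom, lift_eq]
  rfl

theorem shearHom_invSelf (c : R) : shearHom c u = u := by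
  have h := congrArg (shearHom c) (mul_invSelf (S := L) (X 0 : MvPolynomial (Fin 4) R))
  rw [map_mul, map_one, shearHom_algebraMap, aeval_X] at h
  exact (algebraMap_isUnit (X 0)).mul_left_cancel (h.trans (mul_invSelf _).symm)

theorem shearHom_comp (c d : R) : (shearHom c).comp (shearHom d) = shearHom (c + d) := by
  refine IsLocalization.algHom_ext (Submonoid.powers (X 0 : MvPolynomial (Fin 4) R))
    (algHom_ext fun i => ?_)
  change shearHom c (shearHom d (t i)) = shearHom (c + d) (t i)
  fin_cases i <;>
    simp only [Fin.isValue, Fin.zero_eta, Fin.mk_one, Fin.reduceFinMk, shearHom_algebraMap,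
      shearVec, aeval_X, Matrix.cons_val, Matrix.cons_val_zero, Matrix.cons_val_one, map_add,
      map_smul, map_mul, map_pow, shearHom_invSelf] <;>
    module

theorem shearHom_zero : shearHom (0 : R) = AlgHom.id R L := by
  refine IsLocalization.algHom_ext (Submonoid.powers (X 0 : MvPolynomial (Fin 4) R))
    (algHom_ext fun i => ?_)
  change shearHom 0 (t i) = t i
  fin_cases i <;> simp [shearHom_algebraMap, shearVec]

def shear : L ≃ₐ[R] L :=
  .ofAlgHom (shearHom (-1)) (shearHom 1) (by rw [shearHom_comp, neg_add_cancel, shearHom_zero])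
    (by rw [shearHom_comp, add_neg_cancel, shearHom_zero])

theorem shear_algebraMap_X (i : Fin 4) : shear (t i) = shearVec (-1) i :=
  (shearHom_algebraMap _ _).trans (aeval_X _ _)

theorem shear_algebraMap_X_two : shear (t 2) = (t 2) - (t 1) ^ 3 * u ^ 2 := by
  simp [shear_algebraMap_X, shearVec, sub_eq_add_neg]

theorem shear_algebraMap_X_three : shear (t 3) = (t 3) - (t 1) ^ 4 * u ^ 3 := by
  simp [shear_algebraMap_X, shearVec, sub_eq_add_neg]

section Localize

variable {f : MvPolynomial (Fin 4) R →ₐ[R] MvPolynomial (Fin 2) R} (hf : f (X 0) = X 0 ^ 4)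
include hf

theorem map_powers_X_zero : (Submonoid.powers (X 0)).map f = Submonoid.powers (X 0 ^ 4) := by
  rw [Submonoid.map_powers, hf]

def localize : L →+* P :=
  IsLocalization.map P (f : MvPolynomial (Fin 4) R →+* MvPolynomial (Fin 2) R)
    (Submonoid.map_le_iff_le_comap.1 (map_powers_X_zero hf).le)

theorem ker_localize :
    RingHom.ker (localize hf) =
      (RingHom.ker (f : MvPolynomial (Fin 4) R →+* MvPolynomial (Fin 2) R)).map (algebraMap _ L) :=
  IsLocalization.ker_map P _ (map_powers_X_zero hf)

theorem localize_algebraMap (p : MvPolynomial (Fin 4) R) :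
    localize hf (algebraMap _ L p) = algebraMap _ P (f p) :=
  IsLocalization.map_eq _ _

theorem localize_invSelf : algebraMap (MvPolynomial (Fin 2) R) P (X 0 ^ 4) * localize hf u = 1 := by
  have h := congrArg (localize hf) (mul_invSelf (S := L) (X 0 : MvPolynomial (Fin 4) R))
  rwa [map_mul, map_one, localize_algebraMap, hf] at h

end Localize

theorem localize_param_shear_X_two : localize (param_X_zero R) (shear (t 2)) = 0 := by
  have hv := localize_invSelf (param_X_zero R)
  rw [shear_algebraMap_X_two]
  simp only [map_sub, map_mul, map_pow, localize_algebraMap, param_X] at hv ⊢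
  simp only [Matrix.cons_val, map_mul, map_pow]
  set x := algebraMap (MvPolynomial (Fin 2) R) P (X 0)
  set y := algebraMap (MvPolynomial (Fin 2) R) P (X 1)
  set v := localize (param_X_zero R) u
  linear_combination (-(x * y ^ 3) * (x ^ 4 * v + 1)) * hv

theorem localize_param_shear_X_three : localize (param_X_zero R) (shear (t 3)) = 0 := by
  have hv := localize_invSelf (param_X_zero R)
  rw [shear_algebraMap_X_three]
  simp only [map_sub, map_mul, map_pow, localize_algebraMap, param_X] at hv ⊢
  simp only [Matrix.cons_val, map_mul, map_pow]
  set x := algebraMap (MvPolynomial (Fin 2) R) P (X 0)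
  set y := algebraMap (MvPolynomial (Fin 2) R) P (X 1)
  set v := localize (param_X_zero R) u
  linear_combination (-y ^ 4 * ((x ^ 4 * v) ^ 2 + x ^ 4 * v + 1)) * hv

theorem localize_param_comp_shear :
    (localize (param_X_zero R)).comp ((shear : L ≃ₐ[R] L) : L →+* L) =
      localize (shearedParam_X_zero R) := by
  refine IsLocalization.ringHom_ext (Submonoid.powers (X 0 : MvPolynomial (Fin 4) R)) ?_
  refine MvPolynomial.ringHom_ext (fun r => ?_) (fun i => ?_)
  · have hC : algebraMap (MvPolynomial (Fin 4) R) L (C r) = algebraMap R L r :=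
      (IsScalarTower.algebraMap_apply _ _ _ _).symm
    simp only [RingHom.comp_apply, RingHom.coe_coe, hC, AlgEquiv.commutes]
    rw [← hC, localize_algebraMap, localize_algebraMap, algHom_C, algHom_C]
  · simp only [RingHom.comp_apply, RingHom.coe_coe, localize_algebraMap, shearedParam_X]
    fin_cases i
    · simp [shear_algebraMap_X, shearVec, localize_algebraMap, param_X]
    · simp [shear_algebraMap_X, shearVec, localize_algebraMap, param_X]
    · exact localize_param_shear_X_two.trans (map_zero _).symm
    · exact localize_param_shear_X_three.trans (map_zero _).symm

theorem map_ker_param :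
    (RingHom.ker (param R : MvPolynomial (Fin 4) R →+* MvPolynomial (Fin 2) R)).map
      (algebraMap _ L) = Ideal.span {(t 2) - (t 1) ^ 3 * u ^ 2, (t 3) - (t 1) ^ 4 * u ^ 3} := by
  rw [← ker_localize (param_X_zero R),
    RingHom.ker_eq_map_ker_comp _ (shear : L ≃ₐ[R] L).toRingEquiv, AlgEquiv.toRingEquiv_toRingHom,
    localize_param_comp_shear, ker_localize, ker_shearedParam, Ideal.map_span, Ideal.map_span,
    Set.image_pair, Set.image_pair, AlgEquiv.coe_ringEquiv, shear_algebraMap_X_two,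
    shear_algebraMap_X_three]

theorem isRegular [IsDomain R] :
    RingTheory.Sequence.IsRegular L [(t 2) - (t 1) ^ 3 * u ^ 2, (t 3) - (t 1) ^ 4 * u ^ 3] := by
  have hweak : RingTheory.Sequence.IsWeaklyRegular L [t 2, t 3] := by
    simpa using (isWeaklyRegular_X_X (R := R) (by decide : (2 : Fin 4) ≠ 3)).of_isLocalization L
      (Submonoid.powers (X 0))
  let e : L ≃+* L := (shear (R := R)).toRingEquiv
  have := RingHomInvPair.of_ringEquiv e
  have := RingHomInvPair.symm (e : L →+* L) (e.symm : L →+* L)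
  have hlist : [(t 2) - (t 1) ^ 3 * u ^ 2, (t 3) - (t 1) ^ 4 * u ^ 3] = [t 2, t 3].map e := by
    simp [e, shear_algebraMap_X_two, shear_algebraMap_X_three]
  refine ⟨hlist ▸ (e.toSemilinearEquiv.isWeaklyRegular_congr' _).1 hweak, ?_⟩
  rw [Ideal.ofList_cons, Ideal.ofList_singleton, ← Ideal.span_insert, Ideal.smul_eq_mul,
    Ideal.mul_top, ← map_ker_param, ← ker_localize (param_X_zero R)]
  have : IsDomain P := Localization.Away.isDomain (pow_ne_zero 4 (X_ne_zero 0))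
  exact (RingHom.ker_ne_top _).symm

end RationalQuartic

end

/-- Let `I ⊆ R = ℤ[t₁,t₂,t₃,t₄]` be the kernel of the map `R → ℤ[x,y]` with `t₁ ↦ x⁴`,
`t₂ ↦ x³y`, `t₃ ↦ xy³`, `t₄ ↦ y⁴`.  In the localization `R_{t₁}`, the extended ideal `I R_{t₁}`
is generated by the two elements `t₃ - t₂³/t₁²` and `t₄ - t₂⁴/t₁³`, and these two elements
form a regular sequence in `R_{t₁}`. -/
theorem localized_defining_ideal_is_complete_intersection :
    let x : MvPolynomial (Fin 2) ℤ := X 0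
    let y : MvPolynomial (Fin 2) ℤ := X 1
    let R := MvPolynomial (Fin 4) ℤ
    let φ : R →ₐ[ℤ] MvPolynomial (Fin 2) ℤ := aeval ![x ^ 4, x ^ 3 * y, x * y ^ 3, y ^ 4]
    let I : Ideal R := RingHom.ker (φ : R →+* MvPolynomial (Fin 2) ℤ)
    let L := Localization.Away (X 0 : R)
    let u : L := IsLocalization.Away.invSelf (S := L) (X 0 : R)  -- `u = 1/t₁`
    let g₃ : L := algebraMap R L (X 2) - algebraMap R L (X 1) ^ 3 * u ^ 2
    let g₄ : L := algebraMap R L (X 3) - algebraMap R L (X 1) ^ 4 * u ^ 3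
    Ideal.map (algebraMap R L) I = Ideal.span {g₃, g₄} ∧
    RingTheory.Sequence.IsRegular L [g₃, g₄] :=
  ⟨RationalQuartic.map_ker_param, RationalQuartic.isRegular⟩
end

section
/- Let A be a domain and φ : A[t_1,...,t_d] → A[x_1,...,x_k] the A-algebra map sending the t_i bijectively onto the distinct monomials of degree n (with d = C(n+k−1, k−1)). Then the kernel I of φ is a prime ideal and height I = d − k. -/
open MvPolynomial

/-- The height of an ideal `I` in a commutative ring: the infimum of the heights (in the
prime spectrum) of the prime ideals containing `I`. -/
noncomputable def idealHeight {R : Type*} [CommRing R] (I : Ideal R) : ℕ∞ :=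
  ⨅ (p : PrimeSpectrum R) (_ : I ≤ p.asIdeal), Order.height p

/-!
Let `c j` be the index with `φ (t_{c j}) = x_j ^ n`.

Lower bound: send `t_v` to `x ^ (e v)` for `v` in a set `s` containing every `c j`, and to a
fresh variable `y_v` otherwise. The kernels are primes, equal to `I` for `s = univ`, and they grow
strictly each time a further `v` enters `s`; hence `height I ≥ d - k`.

Upper bound: following `φ` by the substitutions `x_j ↦ 0`, one `j` at a time, gives a chain of
`k + 1` primes starting at `I`. The last one meets `A` only in `0`, so it survives in
`Frac(A)[t_1, …, t_d]`, of dimension `d`; hence `height I + k ≤ d`.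
-/

open Finset

theorem idealHeight_eq_height {R : Type*} [CommRing R] (I : Ideal R) [hI : I.IsPrime] :
    idealHeight I = I.height := by
  have h : I.height = Order.height (⟨I, hI⟩ : PrimeSpectrum R) :=
    PrimeSpectrum.height_eq_orderHeight ⟨I, hI⟩
  rw [h, idealHeight]
  exact le_antisymm (iInf₂_le (⟨I, hI⟩ : PrimeSpectrum R) le_rfl)
    (le_iInf₂ fun p hp => Order.height_mono ((PrimeSpectrum.asIdeal_le_asIdeal _ p).mp hp))

theorem Ideal.height_add_card_le_of_lt_insert {R ι : Type*} [CommRing R] [DecidableEq ι]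
    (J : Finset ι → Ideal R) (hJp : ∀ t, (J t).IsPrime) (s : Finset ι)
    (hJ : ∀ t ⊆ s, ∀ a ∈ s, a ∉ t → J t < J (insert a t)) :
    (J ∅).height + #s ≤ (J s).height := by
  induction s using Finset.induction_on with
  | empty => simp
  | insert a s ha ih =>
    have hs : (J ∅).height + #s ≤ (J s).height :=
      ih fun t ht b hb hbt => hJ t (ht.trans (subset_insert a s)) b (mem_insert_of_mem hb) hbt
    calc (J ∅).height + #(insert a s) = (J ∅).height + #s + 1 := by
          rw [card_insert_of_notMem ha]; push_cast; ring
      _ ≤ (J s).height + 1 := by gcongr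
      _ ≤ (J (insert a s)).height :=
          have := hJp s; have := hJp (insert a s)
          Ideal.height_add_one_le_of_lt_of_isPrime
            (hJ s (subset_insert a s) a (mem_insert_self a s) ha)

theorem MvPolynomial.height_le_card_of_under_eq_bot {A ι : Type*} [CommRing A] [IsDomain A]
    [Finite ι] (P : Ideal (MvPolynomial ι A)) [P.IsPrime] (hP : P.under A = ⊥) :
    P.height ≤ Nat.card ι := by
  let M := (nonZeroDivisors A).map (C : A →+* MvPolynomial ι A)
  let := algebraMvPolynomial (σ := ι) (R := A) (S := FractionRing A)
  have hdisj : Disjoint (M : Set (MvPolynomial ι A)) P := by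
    rw [Set.disjoint_left]
    rintro _ ⟨a, ha, rfl⟩ haP
    have : a ∈ P.under A := haP
    rw [hP, Ideal.mem_bot] at this
    exact nonZeroDivisors.ne_zero ha this
  have := IsLocalization.isPrime_of_isPrime_disjoint M (MvPolynomial ι (FractionRing A)) P ‹_›
    hdisj
  have h := Ideal.height_le_ringKrullDim_of_isPrime
    (I := P.map (algebraMap _ (MvPolynomial ι (FractionRing A))))
  rw [IsLocalization.height_map_of_disjoint M P hdisj,
    MvPolynomial.ringKrullDim_of_isNoetherianRing, ringKrullDim_eq_zero_of_field, zero_add] at h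
  exact_mod_cast h

theorem AlgHom.under_ker_eq_bot {A R B : Type*} [CommRing A] [CommRing R] [CommRing B]
    [Algebra A R] [Algebra A B] (hB : Function.Injective (algebraMap A B)) (f : R →ₐ[A] B) :
    (RingHom.ker f).under A = ⊥ := by
  ext a
  rw [Ideal.under, Ideal.mem_comap, RingHom.mem_ker, AlgHom.commutes, Ideal.mem_bot,
    map_eq_zero_iff _ hB]

section MonomialMap

variable {A ι σ : Type*} [CommRing A]

noncomputable def monomialMap (e : ι → σ →₀ ℕ) : MvPolynomial ι A →ₐ[A] MvPolynomial σ A :=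
  aeval fun v => monomial (e v) 1

theorem monomialMap_X_of_eq_single {e : ι → σ →₀ ℕ} {v : ι} {j : σ} {n : ℕ}
    (hv : e v = Finsupp.single j n) : monomialMap (A := A) e (X v) = X j ^ n := by
  rw [monomialMap, aeval_X, hv, X_pow_eq_monomial]

end MonomialMap

theorem MvPolynomial.monomial_one_pow_eq_prod {A σ : Type*} [CommRing A] (a : σ →₀ ℕ) (n : ℕ) :
    monomial a (1 : A) ^ n = a.prod fun j m => (X j ^ n) ^ m := by
  rw [monomial_eq, C_1, one_mul, Finsupp.prod, Finsupp.prod, ← prod_pow]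
  exact prod_congr rfl fun j _ => pow_right_comm _ _ _

section PartialMonomialMap

variable {A ι σ : Type*} [CommRing A] [DecidableEq ι]

noncomputable def partialMonomialMap (e : ι → σ →₀ ℕ) (s : Finset ι) :
    MvPolynomial ι A →ₐ[A] MvPolynomial (σ ⊕ ι) A :=
  aeval fun v => if v ∈ s then rename Sum.inl (monomial (e v) 1) else X (Sum.inr v)

theorem partialMonomialMap_univ [Fintype ι] (e : ι → σ →₀ ℕ) :
    partialMonomialMap (A := A) e univ = (rename Sum.inl).comp (monomialMap e) := by
  apply algHom_ext
  simp [partialMonomialMap, monomialMap]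

theorem ker_partialMonomialMap_univ [Fintype ι] (e : ι → σ →₀ ℕ) :
    RingHom.ker (partialMonomialMap (A := A) e univ) = RingHom.ker (monomialMap e) := by
  ext x
  rw [RingHom.mem_ker, RingHom.mem_ker, partialMonomialMap_univ, AlgHom.comp_apply,
    map_eq_zero_iff _ (rename_injective _ Sum.inl_injective)]

theorem ker_partialMonomialMap_mono (e : ι → σ →₀ ℕ) {s s' : Finset ι} (h : s ⊆ s') :
    RingHom.ker (partialMonomialMap (A := A) e s) ≤ RingHom.ker (partialMonomialMap e s') := by
  let θ : MvPolynomial (σ ⊕ ι) A →ₐ[A] MvPolynomial (σ ⊕ ι) A :=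
    aeval (Sum.elim (fun j => X (Sum.inl j)) fun v => partialMonomialMap e s' (X v))
  have hθ_inl : θ.comp (rename Sum.inl) = rename Sum.inl := algHom_ext fun j => by simp [θ]
  have hθ : θ.comp (partialMonomialMap e s) = partialMonomialMap e s' := by
    apply algHom_ext
    intro v
    by_cases hv : v ∈ s
    · simp only [AlgHom.comp_apply, partialMonomialMap, aeval_X, if_pos hv, if_pos (h hv)]
      exact AlgHom.congr_fun hθ_inl _
    · simp [θ, partialMonomialMap, hv]
  intro x hx
  rw [RingHom.mem_ker] at hx ⊢
  rw [← hθ, AlgHom.comp_apply, hx, map_zero]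

theorem partialMonomialMap_prod_X_pow {e : ι → σ →₀ ℕ} {c : σ → ι} {n : ℕ}
    (hc : ∀ j, e (c j) = Finsupp.single j n) {s : Finset ι} (hs : ∀ j, c j ∈ s) (a : σ →₀ ℕ) :
    partialMonomialMap (A := A) e s (a.prod fun j m => X (c j) ^ m) =
      rename Sum.inl (monomial a 1 ^ n) := by
  rw [monomial_one_pow_eq_prod, map_finsuppProd, map_finsuppProd]
  refine Finsupp.prod_congr fun j _ => ?_
  rw [map_pow, map_pow, partialMonomialMap, aeval_X, if_pos (hs j), hc j, X_pow_eq_monomial]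

theorem ker_partialMonomialMap_lt_insert [IsDomain A] {e : ι → σ →₀ ℕ} {c : σ → ι} {n : ℕ}
    (hn : n ≠ 0) (hc : ∀ j, e (c j) = Finsupp.single j n) {s : Finset ι} (hs : ∀ j, c j ∈ s)
    {v : ι} (hv : v ∉ s) :
    RingHom.ker (partialMonomialMap (A := A) e s) <
      RingHom.ker (partialMonomialMap e (insert v s)) := by
  -- `t_v ^ n` and the product of the pure powers `t_{c j}` both map to `x ^ (n • e v)`
  set w : MvPolynomial ι A := X v ^ n - (e v).prod fun j m => X (c j) ^ m
  refine SetLike.lt_iff_le_and_exists.mpr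
    ⟨ker_partialMonomialMap_mono e (subset_insert v s), w, ?_, ?_⟩
  · rw [RingHom.mem_ker, map_sub,
      partialMonomialMap_prod_X_pow hc fun j => mem_insert_of_mem (hs j), map_pow,
      partialMonomialMap, aeval_X, if_pos (mem_insert_self v s), map_pow, sub_self]
  · rw [RingHom.mem_ker, map_sub, partialMonomialMap_prod_X_pow hc hs, map_pow,
      partialMonomialMap, aeval_X, if_neg hv, sub_eq_zero]
    intro h
    have := congrArg (aeval (R := A) (Sum.elim X (0 : ι → MvPolynomial σ A))) h
    rw [map_pow, aeval_X, Sum.elim_inr, Pi.zero_apply, zero_pow hn, aeval_rename,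
      Sum.elim_comp_inl, aeval_X_left_apply] at this
    exact pow_ne_zero n (monomial_eq_zero.not.mpr one_ne_zero) this.symm

end PartialMonomialMap

theorem card_sub_card_le_height_ker_monomialMap {A ι σ : Type*} [CommRing A] [IsDomain A]
    [Fintype ι] [DecidableEq ι] [Fintype σ] {e : ι → σ →₀ ℕ} {c : σ → ι} {n : ℕ} (hn : n ≠ 0)
    (hc : ∀ j, e (c j) = Finsupp.single j n) :
    ((Fintype.card ι - Fintype.card σ : ℕ) : ℕ∞) ≤
      (RingHom.ker (monomialMap (A := A) e)).height := by
  have hc_inj : Function.Injective c := fun i j h => Finsupp.single_left_injective hn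
    (show Finsupp.single i n = Finsupp.single j n by rw [← hc i, ← hc j, h])
  set T := univ.image c
  have hcT : ∀ j, c j ∈ T := fun j => mem_image_of_mem c (mem_univ j)
  have hchain := Ideal.height_add_card_le_of_lt_insert
    (fun t => RingHom.ker (partialMonomialMap (A := A) e (T ∪ t))) (fun _ => RingHom.ker_isPrime _)
    Tᶜ fun t _ v hv hvt => by
      rw [union_insert]
      exact ker_partialMonomialMap_lt_insert hn hc (fun j => mem_union_left t (hcT j))
        (notMem_union.mpr ⟨mem_compl.mp hv, hvt⟩)
  rw [union_compl, ker_partialMonomialMap_univ, card_compl, card_image_of_injective _ hc_inj,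
    card_univ] at hchain
  exact le_add_self.trans hchain

section KillVars

variable {A ι σ : Type*} [CommRing A] [DecidableEq σ]

noncomputable def killVars (u : Finset σ) : MvPolynomial σ A →ₐ[A] MvPolynomial σ A :=
  aeval fun j => if j ∈ u then 0 else X j

theorem killVars_empty : killVars (A := A) (∅ : Finset σ) = AlgHom.id A _ := by
  apply algHom_ext
  simp [killVars]

theorem killVars_comp_of_subset {u u' : Finset σ} (h : u ⊆ u') :
    (killVars u').comp (killVars u) = killVars (A := A) u' := by
  apply algHom_ext
  intro j
  by_cases hj : j ∈ u
  · simp [killVars, hj, h hj]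
  · simp [killVars, hj]

theorem ker_killVars_comp_lt_insert [IsDomain A] (f : MvPolynomial ι A →ₐ[A] MvPolynomial σ A)
    {v : ι} {j : σ} {n : ℕ} (hn : n ≠ 0) (hv : f (X v) = X j ^ n) {u : Finset σ} (hj : j ∉ u) :
    RingHom.ker ((killVars u).comp f) < RingHom.ker ((killVars (insert j u)).comp f) := by
  refine SetLike.lt_iff_le_and_exists.mpr ⟨fun x hx => ?_, X v, ?_, ?_⟩
  · rw [RingHom.mem_ker] at hx ⊢
    rw [← killVars_comp_of_subset (subset_insert j u), AlgHom.comp_assoc, AlgHom.comp_apply, hx,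
      map_zero]
  · simp [RingHom.mem_ker, hv, killVars, hn]
  · simp [RingHom.mem_ker, hv, killVars, hj, X_ne_zero]

theorem height_ker_add_card_le_of_map_X_eq_pow [IsDomain A] [Fintype σ] [Finite ι]
    (f : MvPolynomial ι A →ₐ[A] MvPolynomial σ A) {c : σ → ι} {n : ℕ} (hn : n ≠ 0)
    (hc : ∀ j, f (X (c j)) = X j ^ n) :
    (RingHom.ker f).height + Fintype.card σ ≤ Nat.card ι := by
  have hchain := Ideal.height_add_card_le_of_lt_insert
    (fun u => RingHom.ker ((killVars u).comp f)) (fun _ => RingHom.ker_isPrime _) univ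
    fun _ _ j _ hj => ker_killVars_comp_lt_insert f hn (hc j) hj
  rw [killVars_empty, AlgHom.id_comp, card_univ] at hchain
  have := RingHom.ker_isPrime ((killVars (A := A) (univ : Finset σ)).comp f)
  exact hchain.trans (MvPolynomial.height_le_card_of_under_eq_bot _
    (AlgHom.under_ker_eq_bot (C_injective σ A) _))

end KillVars

theorem veronese_defining_ideal_prime_and_height_general
    (A : Type*) [CommRing A] [IsDomain A] (k d n : ℕ) (hn : 0 < n)
    (e : Fin d → (Fin k →₀ ℕ))
    (hrange : Set.range e = {s : Fin k →₀ ℕ | (s.sum fun _ m => m) = n}) :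
    let φ : MvPolynomial (Fin d) A →ₐ[A] MvPolynomial (Fin k) A :=
      aeval fun i => monomial (e i) 1
    let I : Ideal (MvPolynomial (Fin d) A) :=
      RingHom.ker (φ : MvPolynomial (Fin d) A →+* MvPolynomial (Fin k) A)
    I.IsPrime ∧ idealHeight I = (d - k : ℕ) := by
  intro φ I
  have hpure : ∀ j, ∃ v, e v = Finsupp.single j n := fun j =>
    (hrange ▸ Finsupp.sum_single_index rfl : Finsupp.single j n ∈ Set.range e)
  choose c hc using hpure
  have lower := card_sub_card_le_height_ker_monomialMap (A := A) hn.ne' hc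
  have upper := height_ker_add_card_le_of_map_X_eq_pow (monomialMap (A := A) e) hn.ne'
    fun j => monomialMap_X_of_eq_single (hc j)
  simp only [Fintype.card_fin, Nat.card_eq_fintype_card] at lower upper
  have hI : I.IsPrime := RingHom.ker_isPrime _
  refine ⟨hI, ?_⟩
  rw [idealHeight_eq_height]
  change (RingHom.ker (monomialMap (A := A) e)).height = _
  obtain ⟨m, hm⟩ := ENat.ne_top_iff_exists.mp (ne_top_of_le_ne_top (ENat.natCast_ne_top d)
    (le_self_add.trans upper))
  rw [← hm] at lower upper ⊢
  norm_cast at lower upper ⊢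
  omega

/-- Let `A` be a domain and `φ : A[t₁,…,t_d] → A[x₁,…,x_k]` the `A`-algebra map sending the
`tᵢ` bijectively onto the distinct monomials of degree `n` (so `d = C(n+k-1, k-1)`), whose image
is the `n`-th Veronese subring.  Then `I = ker φ` is a prime ideal and `height I = d - k`. -/
theorem veronese_defining_ideal_prime_and_height
    (A : Type*) [CommRing A] [IsDomain A] (k d n : ℕ) (hk : 0 < k) (hn : 0 < n)
    (hd : d = Nat.choose (n + k - 1) (k - 1))
    (e : Fin d → (Fin k →₀ ℕ)) (he : Function.Injective e)
    (hrange : Set.range e = {s : Fin k →₀ ℕ | (s.sum fun _ m => m) = n}) :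
    let φ : MvPolynomial (Fin d) A →ₐ[A] MvPolynomial (Fin k) A :=
      aeval fun i => monomial (e i) 1
    let I : Ideal (MvPolynomial (Fin d) A) :=
      RingHom.ker (φ : MvPolynomial (Fin d) A →+* MvPolynomial (Fin k) A)
    I.IsPrime ∧ idealHeight I = (d - k : ℕ) :=
  veronese_defining_ideal_prime_and_height_general A k d n hn e hrange
end
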